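/- For every real u > 1 there exist an integer j ≥ 1 and a Borel set H ⊆ Λ_{j−1} ∖ Λ_j such that the super-level set {x ∈ [0,1] : φ_α(x) > u} coincides with Λ_j ∪ H up to an 𝔪-null set; consequently λ^j ≤ u^{−α} ≤ λ^{j−1}, so that j grows logarithmically in u. (Structural description of the rare-event sets, equation (4.3) of the paper.) -/

import Mathlib

open Set MeasureTheory Filter
open scoped ENNReal Topology Classical

/-- The setup of Section 2 of the paper: a full-branched Markov linear map `G` on `[0,1]`
with branch domains `I_1,…,I_{k_I}` (mapped affinely onto `[0,1]`) and complementary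
intervals `J_j` (mapped affinely onto `(0,1)`), all of length at most `1/2`. -/
structure CantorData where
  kI : ℕ
  hkI : 1 ≤ kI
  a : ℕ → ℝ
  ha_lt : ∀ i, i + 1 < 2 * kI → a i < a (i + 1)
  ha0 : 0 ≤ a 0
  ha1 : a (2 * kI - 1) ≤ 1
  G : ℝ → ℝ
  hGmaps : Set.MapsTo G (Set.Icc 0 1) (Set.Icc 0 1)
  hGI : ∀ i < kI, ∃ s c : ℝ,
    |s| * (a (2 * i + 1) - a (2 * i)) = 1 ∧
    (∀ x ∈ Set.Icc (a (2 * i)) (a (2 * i + 1)), G x = s * x + c) ∧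
    Set.BijOn G (Set.Icc (a (2 * i)) (a (2 * i + 1))) (Set.Icc 0 1)
  hGJmid : ∀ i, i + 1 < kI → ∃ s c : ℝ,
    |s| * (a (2 * i + 2) - a (2 * i + 1)) = 1 ∧
    (∀ x ∈ Set.Ioo (a (2 * i + 1)) (a (2 * i + 2)), G x = s * x + c) ∧
    Set.SurjOn G (Set.Ioo (a (2 * i + 1)) (a (2 * i + 2))) (Set.Ioo 0 1)
  hGJleft : 0 < a 0 → ∃ s c : ℝ,
    |s| * a 0 = 1 ∧
    (∀ x ∈ Set.Ico 0 (a 0), G x = s * x + c) ∧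
    Set.SurjOn G (Set.Ico 0 (a 0)) (Set.Ioo 0 1)
  hGJright : a (2 * kI - 1) < 1 → ∃ s c : ℝ,
    |s| * (1 - a (2 * kI - 1)) = 1 ∧
    (∀ x ∈ Set.Ioc (a (2 * kI - 1)) 1, G x = s * x + c) ∧
    Set.SurjOn G (Set.Ioc (a (2 * kI - 1)) 1) (Set.Ioo 0 1)
  hIlen : ∀ i < kI, a (2 * i + 1) - a (2 * i) ≤ 1 / 2
  hJlenL : a 0 ≤ 1 / 2
  hJlenR : 1 - a (2 * kI - 1) ≤ 1 / 2
  hJlenM : ∀ i, i + 1 < kI → a (2 * i + 2) - a (2 * i + 1) ≤ 1 / 2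
  hkJ : (Set.Icc (0:ℝ) 1 \ ⋃ i ∈ Finset.range kI,
      Set.Icc (a (2 * i)) (a (2 * i + 1))).Nonempty

namespace CantorData

variable (S : CantorData)

/-- The union `⋃_i I_i` of the branch domains forming the Cantor construction. -/
def IU : Set ℝ := ⋃ i ∈ Finset.range S.kI, Set.Icc (S.a (2 * i)) (S.a (2 * i + 1))

/-- `Λ_n = {x ∈ [0,1] : G^{i-1}(x) ∈ ⋃ I for all 1 ≤ i ≤ n}`. -/
def Lam (n : ℕ) : Set ℝ := {x ∈ Set.Icc (0:ℝ) 1 | ∀ i < n, S.G^[i] x ∈ S.IU}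

/-- The dynamically defined Cantor set `Λ = ⋂_n Λ_n`. -/
def Cantor : Set ℝ := ⋂ n : ℕ, S.Lam n

/-- `λ = |⋃ I_i| = Σ_i 1/m_i`. -/
noncomputable def lam : ℝ := ∑ i ∈ Finset.range S.kI, (S.a (2 * i + 1) - S.a (2 * i))

/-- `𝔪`, Lebesgue measure on `[0,1]`. -/
noncomputable def mes (_S : CantorData) : Measure ℝ := volume.restrict (Set.Icc 0 1)

/-- `ψ(x) = Σ_{i ∈ 𝓘_x} 2^{-i}` where `𝓘_x = {i ≥ 1 : G^{i-1}(x) ∉ ⋃ I}`. -/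
noncomputable def psi (x : ℝ) : ℝ :=
  ∑' i : ℕ, if S.G^[i] x ∈ S.IU then 0 else (2:ℝ)⁻¹ ^ (i + 1)

/-- `F(t) = 𝔪{x : ψ(x) ≤ t}`, the distribution function of `ψ`. -/
noncomputable def F (t : ℝ) : ℝ := (S.mes {x | S.psi x ≤ t}).toReal

/-- `φ_α = (F ∘ ψ)^{-1/α}`, with value `∞` where `F ∘ ψ` vanishes. -/
noncomputable def phi (α : ℝ) (x : ℝ) : ℝ≥0∞ :=
  ENNReal.ofReal (S.F (S.psi x)) ^ (-(1 / α))

/-- `X_n = φ_α ∘ G^n`. -/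
noncomputable def X (α : ℝ) (n : ℕ) (x : ℝ) : ℝ≥0∞ := S.phi α (S.G^[n] x)

/-- `P_n`: the points following the Cantor construction exactly `n` steps and
never entering `⋃ I` afterwards. -/
def Pset (n : ℕ) : Set ℝ :=
  {x ∈ Set.Icc (0:ℝ) 1 | (∀ i < n, S.G^[i] x ∈ S.IU) ∧ ∀ i, n ≤ i → S.G^[i] x ∉ S.IU}

/-- The family of partition intervals `(I,J)_1,…,(I,J)_{k_I+k_J}`. -/
def PieceFamily : Set (Set ℝ) :=
  ((fun i => Set.Icc (S.a (2 * i)) (S.a (2 * i + 1))) '' Set.Iio S.kI) ∪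
  ((fun i => Set.Ioo (S.a (2 * i + 1)) (S.a (2 * i + 2))) '' {i | i + 1 < S.kI}) ∪
  {Set.Ico (0:ℝ) (S.a 0), Set.Ioc (S.a (2 * S.kI - 1)) 1}

/-- The depth-`d` cylinder `C_w = ⋂_{k=1}^d G^{-(k-1)}((I,J)_{w_k})`. -/
def Cyl (d : ℕ) (w : ℕ → Set ℝ) : Set ℝ := ⋂ k ∈ Finset.range d, (S.G^[k]) ⁻¹' (w k)

/-- `C` is a depth-`d` cylinder. -/
def IsCylinder (d : ℕ) (C : Set ℝ) : Prop :=
  ∃ w : ℕ → Set ℝ, (∀ k < d, w k ∈ S.PieceFamily) ∧ C = S.Cyl d w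

/-- `Υ⁺(A,d)`: union of the depth-`d` cylinders meeting `A`. -/
def upApprox (A : Set ℝ) (d : ℕ) : Set ℝ :=
  ⋃₀ {C | S.IsCylinder d C ∧ (C ∩ A).Nonempty}

/-- `Υ⁻(A,d)`: union of the depth-`d` cylinders contained in `A`. -/
def lowApprox (A : Set ℝ) (d : ℕ) : Set ℝ :=
  ⋃₀ {C | S.IsCylinder d C ∧ C ⊆ A}

/-- `u_n(τ) = (n/τ)^{1/α}`. -/
noncomputable def un (_S : CantorData) (α τ : ℝ) (n : ℕ) : ℝ := ((n : ℝ) / τ) ^ (1 / α)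

/-- `U_n(τ) = {X_0 > u_n(τ)}`. -/
noncomputable def Un (α τ : ℝ) (n : ℕ) : Set ℝ :=
  {x ∈ Set.Icc (0:ℝ) 1 | ENNReal.ofReal (S.un α τ n) < S.X α 0 x}

/-- `U_n^{(1)}(τ) = U_n(τ) ∩ G^{-1}([0,1] ∖ U_n(τ))`. -/
noncomputable def Un1 (α τ : ℝ) (n : ℕ) : Set ℝ :=
  S.Un α τ n ∩ S.G ⁻¹' (Set.Icc 0 1 \ S.Un α τ n)

/-- `U_n(τ',τ'') = U_n(τ') ∖ U_n(τ'')`. -/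
noncomputable def UnPair (α τ' τ'' : ℝ) (n : ℕ) : Set ℝ := S.Un α τ' n \ S.Un α τ'' n

/-- `U_n(τ',τ'')^{(1)}`. -/
noncomputable def UnPair1 (α τ' τ'' : ℝ) (n : ℕ) : Set ℝ :=
  S.UnPair α τ' τ'' n ∩ S.G ⁻¹' (Set.Icc 0 1 \ S.UnPair α τ' τ'' n)

/-- `j_{n,τ}`: the least `j` with `λ^j ≤ τ/n`. -/
noncomputable def jn (τ : ℝ) (n : ℕ) : ℕ := sInf {j : ℕ | S.lam ^ j ≤ τ / n}

/-- `Γ_n^+`: outer approximation of `U_n(τ',τ'')^{(1)}` by depth-`2 j_{n,τ'}` cylinders. -/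
noncomputable def GammaPlus (α τ' τ'' : ℝ) (n : ℕ) : Set ℝ :=
  S.upApprox (S.UnPair1 α τ' τ'' n) (2 * S.jn τ' n)

/-- `Γ_n^-`: inner approximation of `U_n(τ',τ'')^{(1)}` by depth-`2 j_{n,τ'}` cylinders. -/
noncomputable def GammaMinus (α τ' τ'' : ℝ) (n : ℕ) : Set ℝ :=
  S.lowApprox (S.UnPair1 α τ' τ'' n) (2 * S.jn τ' n)

end CantorData

/-!
Since `G` maps each `I_i` affinely onto `[0,1]` with slope `1/|I_i|`, `𝔪(Λ_n) = λ^n`, so `Λ` is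
null, and since `G` is piecewise affine its preimages of null sets are null. On `Λ_n` the weight
`ψ` is at most `2^{-n}`, and a point with `ψ y ≤ 2^{-n}` outside `Λ_n` has its orbit in `Λ` from
time `n` on; hence `F(ψ x) ≤ λ^n` on `Λ_n`. Conversely, if `G^m x ∉ ⋃ I` then `Λ_{m+1}` lies in
`{ψ ≤ ψ x}`, so `F(ψ x) ≥ λ^{m+1}`. With `j` least such that `λ^j < u^{-α}`, the set
`{φ_α > u} = {F ∘ ψ < u^{-α}}` therefore contains `Λ_j` and lies in `Λ_{j-1}`, and `H` is its
part in `Λ_{j-1} ∖ Λ_j`.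
-/

open Function

theorem volume_preimage_affine {s : ℝ} (hs : s ≠ 0) (c : ℝ) (A : Set ℝ) :
    volume ((fun x => s * x + c) ⁻¹' A) = ENNReal.ofReal |s⁻¹| * volume A := by
  have : (fun x => s * x + c) ⁻¹' A = (fun x => s * x) ⁻¹' ((fun y => c + y) ⁻¹' A) := by
    ext x; simp [add_comm]
  rw [this, Real.volume_preimage_mul_left hs, measure_preimage_add]

theorem measurableSet_sUnion_inter_preimage {f : ℝ → ℝ} {pieces : Set (Set ℝ)}
    (hpieces : pieces.Countable) (hmeas : ∀ P ∈ pieces, MeasurableSet P)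
    (hf : ∀ P ∈ pieces, ∃ g : ℝ → ℝ, Measurable g ∧ EqOn f g P)
    {A : Set ℝ} (hA : MeasurableSet A) : MeasurableSet (⋃₀ pieces ∩ f ⁻¹' A) := by
  rw [sUnion_eq_biUnion, iUnion₂_inter]
  refine .biUnion hpieces fun P hP => ?_
  obtain ⟨g, hg, hfg⟩ := hf P hP
  rw [hfg.inter_preimage_eq]
  exact (hmeas P hP).inter (hg hA)

theorem volume_sUnion_inter_preimage_eq_zero {f : ℝ → ℝ} {pieces : Set (Set ℝ)}
    (hpieces : pieces.Countable)
    (hf : ∀ P ∈ pieces, ∃ s c : ℝ, s ≠ 0 ∧ EqOn f (fun x => s * x + c) P)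
    {A : Set ℝ} (hA : volume A = 0) : volume (⋃₀ pieces ∩ f ⁻¹' A) = 0 := by
  rw [sUnion_eq_biUnion, iUnion₂_inter, measure_biUnion_null_iff hpieces]
  intro P hP
  obtain ⟨s, c, hs, hfg⟩ := hf P hP
  rw [hfg.inter_preimage_eq]
  exact measure_mono_null inter_subset_right (by rw [volume_preimage_affine hs, hA, mul_zero])

theorem inter_preimage_eq_preimage_of_eqOn {α β : Type*} {f g : α → β} {I : Set α} {B : Set β}
    (hfg : EqOn f g I) (hg : Injective g) (hB : B ⊆ g '' I) : I ∩ f ⁻¹' B = g ⁻¹' B := by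
  rw [hfg.inter_preimage_eq, inter_eq_right, ← hg.preimage_image I]
  exact preimage_mono hB

section BinaryExpansion

variable {p : ℕ → Prop} [DecidablePred p]

theorem summable_ite_inv_two_pow :
    Summable fun i => if p i then (0 : ℝ) else 2⁻¹ ^ (i + 1) :=
  (summable_geometric_two.mul_right 2⁻¹).of_nonneg_of_le (fun i => by split <;> positivity)
    fun i => by split <;> simp [pow_succ]

theorem tsum_ite_inv_two_pow_le {n : ℕ} (h : ∀ i < n, p i) :
    ∑' i, (if p i then (0 : ℝ) else 2⁻¹ ^ (i + 1)) ≤ 2⁻¹ ^ n := by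
  have hge : Summable fun i => ite (n ≤ i) ((2 : ℝ)⁻¹ ^ i) 0 :=
    summable_geometric_two.of_nonneg_of_le (fun i => by split <;> positivity)
      fun i => by split <;> simp
  calc ∑' i, (if p i then (0 : ℝ) else 2⁻¹ ^ (i + 1))
      ≤ ∑' i, ite (n ≤ i) ((2 : ℝ)⁻¹ ^ i) 0 * 2⁻¹ := by
        refine summable_ite_inv_two_pow.tsum_le_tsum (fun i => ?_) (hge.mul_right _)
        by_cases hi : p i
        · simp only [hi, if_true]; split <;> positivity
        · have : n ≤ i := by by_contra! hlt; exact hi (h i hlt)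
          simp [hi, this, pow_succ]
    _ = 2⁻¹ ^ n := by rw [tsum_mul_right, tsum_geometric_inv_two_ge]; ring

theorem inv_two_pow_le_tsum_ite {n : ℕ} (h : ¬ p n) :
    (2⁻¹ : ℝ) ^ (n + 1) ≤ ∑' i, if p i then (0 : ℝ) else 2⁻¹ ^ (i + 1) := by
  simpa [h] using (summable_ite_inv_two_pow (p := p)).le_tsum n fun i _ => by split <;> positivity

theorem forall_ne_of_tsum_ite_inv_two_pow_le {m : ℕ} (hm : ¬ p m)
    (h : ∑' i, (if p i then (0 : ℝ) else 2⁻¹ ^ (i + 1)) ≤ 2⁻¹ ^ (m + 1)) : ∀ i ≠ m, p i := by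
  intro i him
  by_contra hi
  have := (summable_ite_inv_two_pow (p := p)).sum_le_tsum {m, i}
    (fun k _ => by split <;> positivity)
  rw [Finset.sum_pair (Ne.symm him), if_neg hm, if_neg hi] at this
  have : (0 : ℝ) < 2⁻¹ ^ (i + 1) := by positivity
  linarith

end BinaryExpansion

theorem ofReal_lt_ofReal_rpow_neg_one_div_iff {α u b : ℝ} (hα : 0 < α) (hu : 0 < u) :
    ENNReal.ofReal u < ENNReal.ofReal b ^ (-(1 / α)) ↔ b < u ^ (-α) := by
  rw [one_div, ENNReal.rpow_neg, ← ENNReal.inv_rpow, ENNReal.lt_rpow_inv_iff hα,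
    ENNReal.lt_inv_iff_lt_inv, ENNReal.ofReal_rpow_of_pos hu, ← ENNReal.ofReal_inv_of_pos
    (Real.rpow_pos_of_pos hu α), ← Real.rpow_neg hu.le,
    ENNReal.ofReal_lt_ofReal_iff (Real.rpow_pos_of_pos hu _)]

theorem exists_pow_lt_le_pow_pred {l t : ℝ} (hl : l < 1) (ht0 : 0 < t) (ht1 : t ≤ 1) :
    ∃ j : ℕ, 1 ≤ j ∧ l ^ j < t ∧ t ≤ l ^ (j - 1) := by
  have h := exists_pow_lt_of_lt_one ht0 hl
  have hj : 1 ≤ Nat.find h := Nat.one_le_iff_ne_zero.2 fun h0 => by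
    have := Nat.find_spec h
    rw [h0, pow_zero] at this
    linarith
  exact ⟨Nat.find h, hj, Nat.find_spec h, not_lt.1 (Nat.find_min h (by omega))⟩

namespace CantorData

variable (S : CantorData)

theorem a_strictMonoOn : StrictMonoOn S.a (Iic (2 * S.kI - 1)) :=
  strictMonoOn_Iic_of_lt_succ fun m hm => S.ha_lt m (by have := S.hkI; omega)

theorem a_lt_a {i j : ℕ} (hij : i < j) (hj : j ≤ 2 * S.kI - 1) : S.a i < S.a j :=
  S.a_strictMonoOn (hij.le.trans hj) hj hij

theorem a_le_a {i j : ℕ} (hij : i ≤ j) (hj : j ≤ 2 * S.kI - 1) : S.a i ≤ S.a j :=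
  S.a_strictMonoOn.monotoneOn (hij.trans hj) hj hij

theorem Icc_branch_subset_Icc {i : ℕ} (hi : i < S.kI) :
    Icc (S.a (2 * i)) (S.a (2 * i + 1)) ⊆ Icc 0 1 :=
  Icc_subset_Icc (S.ha0.trans (S.a_le_a (Nat.zero_le _) (by omega)))
    ((S.a_le_a (by omega) le_rfl).trans S.ha1)

theorem IU_subset_Icc : S.IU ⊆ Icc 0 1 :=
  iUnion₂_subset fun _ hi => S.Icc_branch_subset_Icc (Finset.mem_range.1 hi)

theorem measurableSet_IU : MeasurableSet S.IU :=
  .biUnion (Finset.range S.kI).countable_toSet fun _ _ => measurableSet_Icc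

theorem isClosed_IU : IsClosed S.IU :=
  (Finset.range S.kI).finite_toSet.isClosed_biUnion fun _ _ => isClosed_Icc

theorem pairwiseDisjoint_branch :
    (Finset.range S.kI : Set ℕ).PairwiseDisjoint
      fun i => Icc (S.a (2 * i)) (S.a (2 * i + 1)) := by
  have disjoint_of_lt : ∀ i j, i < j → j < S.kI →
      Disjoint (Icc (S.a (2 * i)) (S.a (2 * i + 1))) (Icc (S.a (2 * j)) (S.a (2 * j + 1))) :=
    fun i j hij hj => disjoint_left.2 fun x hx hx' =>
      (hx.2.trans_lt (S.a_lt_a (show 2 * i + 1 < 2 * j by omega) (by omega))).not_ge hx'.1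
  intro i hi j hj hij
  simp only [Finset.coe_range, mem_Iio] at hi hj
  rcases hij.lt_or_gt with h | h
  · exact disjoint_of_lt i j h hj
  · exact (disjoint_of_lt j i h hi).symm

theorem pieceFamily_countable : S.PieceFamily.Countable :=
  (((finite_Iio S.kI).image _).union (((finite_Iio S.kI).subset fun i (hi : i + 1 < S.kI) =>
    show i < S.kI by omega).image _) |>.union (toFinite _)).countable

theorem measurableSet_of_mem_pieceFamily {P : Set ℝ} (hP : P ∈ S.PieceFamily) :
    MeasurableSet P := by
  rcases hP with (⟨i, -, rfl⟩ | ⟨i, -, rfl⟩) | rfl | rfl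
  exacts [measurableSet_Icc, measurableSet_Ioo, measurableSet_Ico, measurableSet_Ioc]

theorem exists_affine_eqOn_of_mem_pieceFamily {P : Set ℝ} (hP : P ∈ S.PieceFamily) :
    ∃ s c : ℝ, s ≠ 0 ∧ EqOn S.G (fun x => s * x + c) P := by
  have ne_zero {s L : ℝ} (h : |s| * L = 1) : s ≠ 0 := abs_ne_zero.1 (left_ne_zero_of_mul_eq_one h)
  rcases hP with (⟨i, hi, rfl⟩ | ⟨i, hi, rfl⟩) | rfl | rfl
  · obtain ⟨s, c, hlen, hG, -⟩ := S.hGI i hi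
    exact ⟨s, c, ne_zero hlen, hG⟩
  · obtain ⟨s, c, hlen, hG, -⟩ := S.hGJmid i hi
    exact ⟨s, c, ne_zero hlen, hG⟩
  · by_cases h : 0 < S.a 0
    · obtain ⟨s, c, hlen, hG, -⟩ := S.hGJleft h
      exact ⟨s, c, ne_zero hlen, hG⟩
    · exact ⟨1, 0, one_ne_zero, by simp [Ico_eq_empty h]⟩
  · by_cases h : S.a (2 * S.kI - 1) < 1
    · obtain ⟨s, c, hlen, hG, -⟩ := S.hGJright h
      exact ⟨s, c, ne_zero hlen, hG⟩
    · exact ⟨1, 0, one_ne_zero, by simp [Ioc_eq_empty h]⟩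

theorem Icc_subset_sUnion_pieceFamily : Icc 0 1 ⊆ ⋃₀ S.PieceFamily := by
  rintro x ⟨hx0, hx1⟩
  have hkI := S.hkI
  by_cases hleft : x < S.a 0
  · exact ⟨_, Or.inr (Or.inl rfl), hx0, hleft⟩
  set i := Nat.findGreatest (fun i => S.a (2 * i) ≤ x) (S.kI - 1)
  have hai : S.a (2 * i) ≤ x := Nat.findGreatest_spec (P := fun i => S.a (2 * i) ≤ x)
    (Nat.zero_le _) (not_lt.1 hleft)
  have hi : i ≤ S.kI - 1 := Nat.findGreatest_le _
  by_cases hI : x ≤ S.a (2 * i + 1)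
  · exact ⟨_, Or.inl (Or.inl ⟨i, by simp only [mem_Iio]; omega, rfl⟩), hai, hI⟩
  rw [not_le] at hI
  by_cases hlast : i + 1 < S.kI
  · have hJ : x < S.a (2 * (i + 1)) :=
      not_le.1 (Nat.findGreatest_is_greatest (Nat.lt_succ_self i) (by omega))
    exact ⟨_, Or.inl (Or.inr ⟨i, hlast, rfl⟩), hI, hJ⟩
  · have h2i : 2 * i + 1 = 2 * S.kI - 1 := by omega
    exact ⟨_, Or.inr (Or.inr rfl), h2i ▸ hI, hx1⟩

theorem measurableSet_Icc_inter_preimage {A : Set ℝ} (hA : MeasurableSet A) :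
    MeasurableSet (Icc 0 1 ∩ S.G ⁻¹' A) := by
  rw [← inter_eq_left.2 S.Icc_subset_sUnion_pieceFamily, inter_assoc]
  refine measurableSet_Icc.inter (measurableSet_sUnion_inter_preimage S.pieceFamily_countable
    (fun _ hP => S.measurableSet_of_mem_pieceFamily hP) (fun _ hP => ?_) hA)
  obtain ⟨s, c, -, hG⟩ := S.exists_affine_eqOn_of_mem_pieceFamily hP
  exact ⟨_, by fun_prop, hG⟩

theorem volume_Icc_inter_preimage_eq_zero {A : Set ℝ} (hA : volume A = 0) :
    volume (Icc 0 1 ∩ S.G ⁻¹' A) = 0 := by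
  rw [← inter_eq_left.2 S.Icc_subset_sUnion_pieceFamily, inter_assoc]
  exact measure_mono_null inter_subset_right (volume_sUnion_inter_preimage_eq_zero
    S.pieceFamily_countable (fun _ hP => S.exists_affine_eqOn_of_mem_pieceFamily hP) hA)

theorem setOf_iterate_succ_mem (n : ℕ) (A : Set ℝ) :
    {x ∈ Icc 0 1 | S.G^[n + 1] x ∈ A} = Icc 0 1 ∩ S.G ⁻¹' {y ∈ Icc 0 1 | S.G^[n] y ∈ A} := by
  ext x
  simp only [iterate_succ_apply, mem_ofPred_eq, mem_inter_iff, mem_preimage]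
  exact ⟨fun h => ⟨h.1, S.hGmaps h.1, h.2⟩, fun h => ⟨h.1, h.2.2⟩⟩

theorem measurableSet_setOf_iterate_mem {A : Set ℝ} (hA : MeasurableSet A) (n : ℕ) :
    MeasurableSet {x ∈ Icc 0 1 | S.G^[n] x ∈ A} := by
  induction n with
  | zero => exact measurableSet_Icc.inter hA
  | succ n ih => rw [setOf_iterate_succ_mem]; exact S.measurableSet_Icc_inter_preimage ih

theorem volume_setOf_iterate_mem_eq_zero {A : Set ℝ} (hA : volume A = 0) (n : ℕ) :
    volume {x ∈ Icc 0 1 | S.G^[n] x ∈ A} = 0 := by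
  induction n with
  | zero => exact measure_mono_null (fun x hx => hx.2) hA
  | succ n ih => rw [setOf_iterate_succ_mem]; exact S.volume_Icc_inter_preimage_eq_zero ih

theorem Lam_zero : S.Lam 0 = Icc 0 1 := by
  ext x; simp [Lam]

theorem Lam_subset_Icc (n : ℕ) : S.Lam n ⊆ Icc 0 1 := fun _ hx => hx.1

theorem Lam_succ (n : ℕ) : S.Lam (n + 1) = S.IU ∩ S.G ⁻¹' S.Lam n := by
  ext x
  simp only [Lam, Nat.forall_lt_succ_left, iterate_zero_apply,
    iterate_succ_apply, mem_ofPred_eq, mem_inter_iff, mem_preimage]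
  exact ⟨fun ⟨hx, h0, h⟩ => ⟨h0, S.hGmaps hx, h⟩,
    fun ⟨h0, hG, h⟩ => ⟨S.IU_subset_Icc h0, h0, h⟩⟩

theorem Lam_one : S.Lam 1 = S.IU := by
  rw [Lam_succ, Lam_zero, inter_eq_left]
  exact fun x hx => S.hGmaps (S.IU_subset_Icc hx)

theorem measurableSet_Lam (n : ℕ) : MeasurableSet (S.Lam n) := by
  induction n with
  | zero => rw [Lam_zero]; exact measurableSet_Icc
  | succ n ih =>
    rw [Lam_succ, ← inter_eq_left.2 S.IU_subset_Icc, inter_assoc]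
    exact S.measurableSet_IU.inter (S.measurableSet_Icc_inter_preimage ih)

theorem volume_branch_inter_preimage {i : ℕ} (hi : i < S.kI) {B : Set ℝ} (hB : B ⊆ Icc 0 1) :
    volume (Icc (S.a (2 * i)) (S.a (2 * i + 1)) ∩ S.G ⁻¹' B) =
      ENNReal.ofReal (S.a (2 * i + 1) - S.a (2 * i)) * volume B := by
  obtain ⟨s, c, hlen, hG, hbij⟩ := S.hGI i hi
  have hs : s ≠ 0 := abs_ne_zero.1 (left_ne_zero_of_mul_eq_one hlen)
  have hinj : Injective fun x => s * x + c := fun x y h => by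
    simpa [hs] using h
  have himage : Icc 0 1 = (fun x => s * x + c) '' Icc (S.a (2 * i)) (S.a (2 * i + 1)) :=
    hbij.image_eq.symm.trans (EqOn.image_eq hG)
  rw [inter_preimage_eq_preimage_of_eqOn hG hinj (himage ▸ hB), volume_preimage_affine hs,
    abs_inv, ← eq_inv_of_mul_eq_one_right hlen]

theorem branch_length_nonneg (i : ℕ) (hi : i ∈ Finset.range S.kI) :
    0 ≤ S.a (2 * i + 1) - S.a (2 * i) :=
  sub_nonneg.2 (S.a_le_a (Nat.le_succ _) (by have := Finset.mem_range.1 hi; omega))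

theorem lam_nonneg : 0 ≤ S.lam :=
  Finset.sum_nonneg S.branch_length_nonneg

theorem volume_Lam (n : ℕ) : volume (S.Lam n) = ENNReal.ofReal (S.lam ^ n) := by
  induction n with
  | zero => simp [Lam_zero]
  | succ n ih =>
    have hmeas : ∀ i ∈ Finset.range S.kI,
        MeasurableSet (Icc (S.a (2 * i)) (S.a (2 * i + 1)) ∩ S.G ⁻¹' S.Lam n) := fun i hi => by
      rw [← inter_eq_left.2 (S.Icc_branch_subset_Icc (Finset.mem_range.1 hi)), inter_assoc]
      exact measurableSet_Icc.inter (S.measurableSet_Icc_inter_preimage (S.measurableSet_Lam n))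
    rw [Lam_succ, IU, iUnion₂_inter,
      measure_biUnion_finset (S.pairwiseDisjoint_branch.mono fun _ => inter_subset_left) hmeas,
      Finset.sum_congr rfl fun i hi =>
        S.volume_branch_inter_preimage (Finset.mem_range.1 hi) (S.Lam_subset_Icc n),
      ← Finset.sum_mul, ih, ← ENNReal.ofReal_sum_of_nonneg, ← ENNReal.ofReal_mul, pow_succ',
      lam]
    exacts [S.lam_nonneg, S.branch_length_nonneg]

theorem lam_lt_one : S.lam < 1 := by
  obtain ⟨z, hz, hzIU⟩ := S.hkJ
  set U := S.IUᶜ ∩ Ioo 0 1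
  have hU : IsOpen U := S.isClosed_IU.isOpen_compl.inter isOpen_Ioo
  have hUne : U.Nonempty :=
    mem_closure_iff.1 ((closure_Ioo (zero_ne_one' ℝ)).symm ▸ hz) _ S.isClosed_IU.isOpen_compl hzIU
  have hsum : volume S.IU + volume U ≤ 1 := by
    rw [← measure_union (disjoint_compl_right.mono_right inter_subset_left)
      (S.isClosed_IU.isOpen_compl.inter isOpen_Ioo).measurableSet]
    calc volume (S.IU ∪ U) ≤ volume (Icc (0 : ℝ) 1) :=
          measure_mono (union_subset S.IU_subset_Icc (inter_subset_right.trans Ioo_subset_Icc_self))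
      _ = 1 := by simp
  rw [← S.Lam_one, S.volume_Lam, pow_one] at hsum
  exact ENNReal.ofReal_lt_one.1 ((ENNReal.lt_add_right ENNReal.ofReal_ne_top
    (hU.measure_pos volume hUne).ne').trans_le hsum)

theorem volume_Cantor : volume S.Cantor = 0 := by
  have hlim : Tendsto (fun n => ENNReal.ofReal (S.lam ^ n)) atTop (𝓝 0) := by
    simpa using ENNReal.tendsto_ofReal
      (tendsto_pow_atTop_nhds_zero_of_lt_one S.lam_nonneg S.lam_lt_one)
  exact nonpos_iff_eq_zero.1 (ge_of_tendsto' hlim fun n =>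
    (measure_mono (iInter_subset _ n)).trans (S.volume_Lam n).le)

theorem mem_Cantor_iff {x : ℝ} : x ∈ S.Cantor ↔ x ∈ Icc 0 1 ∧ ∀ i, S.G^[i] x ∈ S.IU :=
  ⟨fun h => ⟨(mem_iInter.1 h 0).1, fun i => (mem_iInter.1 h (i + 1)).2 i (Nat.lt_succ_self i)⟩,
    fun h => mem_iInter.2 fun _ => ⟨h.1, fun i _ => h.2 i⟩⟩

theorem psi_le_of_mem_Lam {n : ℕ} {x : ℝ} (hx : x ∈ S.Lam n) : S.psi x ≤ 2⁻¹ ^ n :=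
  tsum_ite_inv_two_pow_le hx.2

theorem inv_two_pow_le_psi {n : ℕ} {x : ℝ} (hx : S.G^[n] x ∉ S.IU) :
    (2⁻¹ : ℝ) ^ (n + 1) ≤ S.psi x :=
  inv_two_pow_le_tsum_ite hx

theorem mes_apply (A : Set ℝ) : S.mes A = volume (A ∩ Icc 0 1) :=
  Measure.restrict_apply' measurableSet_Icc

theorem mes_ne_top (A : Set ℝ) : S.mes A ≠ ⊤ :=
  ne_top_of_le_ne_top (by simp) ((S.mes_apply A).trans_le (measure_mono inter_subset_right))

theorem F_mono : Monotone S.F := fun _ _ hst =>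
  ENNReal.toReal_mono (S.mes_ne_top _) (measure_mono fun _ hx => le_trans hx hst)

theorem F_psi_le_of_mem_Lam {n : ℕ} {x : ℝ} (hx : x ∈ S.Lam n) : S.F (S.psi x) ≤ S.lam ^ n := by
  -- a point with `ψ y ≤ ψ x` that leaves `⋃ I` before time `n` never leaves it again
  have hsub : {y | S.psi y ≤ S.psi x} ∩ Icc 0 1 ⊆
      S.Lam n ∪ {y ∈ Icc 0 1 | S.G^[n] y ∈ S.Cantor} := by
    rintro y ⟨hy, hyI⟩
    by_cases hyn : ∀ i < n, S.G^[i] y ∈ S.IU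
    · exact Or.inl ⟨hyI, hyn⟩
    push Not at hyn
    obtain ⟨m, hmn, hm⟩ := hyn
    have hle : S.psi y ≤ 2⁻¹ ^ (m + 1) := hy.trans ((S.psi_le_of_mem_Lam hx).trans
      (pow_le_pow_of_le_one (by norm_num) (by norm_num) hmn))
    have hIU := forall_ne_of_tsum_ite_inv_two_pow_le hm hle
    refine Or.inr ⟨hyI, S.mem_Cantor_iff.2 ⟨S.hGmaps.iterate n hyI, fun i => ?_⟩⟩
    rw [← iterate_add_apply]
    exact hIU _ (by omega)
  refine ENNReal.toReal_le_of_le_ofReal (pow_nonneg S.lam_nonneg n) ?_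
  calc S.mes {y | S.psi y ≤ S.psi x}
      ≤ volume (S.Lam n) + volume {y ∈ Icc 0 1 | S.G^[n] y ∈ S.Cantor} :=
        (S.mes_apply _).trans_le ((measure_mono hsub).trans (measure_union_le _ _))
    _ = ENNReal.ofReal (S.lam ^ n) := by
        rw [S.volume_Lam, S.volume_setOf_iterate_mem_eq_zero S.volume_Cantor, add_zero]

theorem pow_le_F_psi {n : ℕ} {x : ℝ} (hx : S.G^[n] x ∉ S.IU) :
    S.lam ^ (n + 1) ≤ S.F (S.psi x) := by
  refine (ENNReal.ofReal_le_iff_le_toReal (S.mes_ne_top _)).1 ?_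
  rw [← S.volume_Lam, S.mes_apply]
  exact measure_mono fun y hy =>
    ⟨(S.psi_le_of_mem_Lam hy).trans (S.inv_two_pow_le_psi hx), hy.1⟩

theorem measurableSet_Icc_inter_preimage_psi {B : Set ℝ} (hB : MeasurableSet B) :
    MeasurableSet (Icc 0 1 ∩ S.psi ⁻¹' B) := by
  set E : ℕ → Set ℝ := fun i => {x ∈ Icc 0 1 | S.G^[i] x ∈ S.IU}
  have hψ : Measurable fun x => ∑' i, if x ∈ E i then (0 : ℝ) else 2⁻¹ ^ (i + 1) :=
    Measurable.tsum fun i =>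
      Measurable.ite (S.measurableSet_setOf_iterate_mem S.measurableSet_IU i) measurable_const
        measurable_const
  have hEq : EqOn S.psi (fun x => ∑' i, if x ∈ E i then (0 : ℝ) else 2⁻¹ ^ (i + 1)) (Icc 0 1) :=
    fun x hx => tsum_congr fun i => by simp [E, hx.1, hx.2]
  rw [hEq.inter_preimage_eq]
  exact measurableSet_Icc.inter (hψ hB)

theorem ofReal_lt_phi_iff {α u : ℝ} (hα : 0 < α) (hu : 0 < u) (x : ℝ) :
    ENNReal.ofReal u < S.phi α x ↔ S.F (S.psi x) < u ^ (-α) :=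
  ofReal_lt_ofReal_rpow_neg_one_div_iff hα hu

theorem setOf_F_psi_lt_eq {t : ℝ} {j : ℕ} (hj : S.lam ^ j < t) (hj' : t ≤ S.lam ^ (j - 1)) :
    {x ∈ Icc 0 1 | S.F (S.psi x) < t} =
      S.Lam j ∪ (S.Lam (j - 1) \ S.Lam j) ∩ {x | S.F (S.psi x) < t} := by
  ext x
  constructor
  · rintro ⟨hx, hF⟩
    by_cases hxj : x ∈ S.Lam j
    · exact Or.inl hxj
    refine Or.inr ⟨⟨⟨hx, fun m hm => ?_⟩, hxj⟩, hF⟩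
    by_contra hm'
    have := (pow_le_pow_of_le_one S.lam_nonneg S.lam_lt_one.le (by omega : m + 1 ≤ j - 1)).trans
      (S.pow_le_F_psi hm')
    linarith
  · rintro (hx | ⟨⟨hx, -⟩, hF⟩)
    · exact ⟨hx.1, (S.F_psi_le_of_mem_Lam hx).trans_lt hj⟩
    · exact ⟨hx.1, hF⟩

theorem measurableSet_inter_setOf_F_psi_lt {A : Set ℝ} (hA : MeasurableSet A)
    (hAI : A ⊆ Icc 0 1) (t : ℝ) : MeasurableSet (A ∩ {x | S.F (S.psi x) < t}) := by
  rw [← inter_eq_left.2 hAI, inter_assoc]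
  exact hA.inter (S.measurableSet_Icc_inter_preimage_psi
    (measurableSet_lt S.F_mono.measurable measurable_const))

end CantorData

/-- for every `u > 1` there are `j ≥ 1` and a Borel set
`H ⊆ Λ_{j-1} ∖ Λ_j` such that `{φ_α > u} = Λ_j ∪ H` up to an `𝔪`-null set;
consequently `λ^j ≤ u^{-α} ≤ λ^{j-1}`. -/
theorem rare_event_set_structure (S : CantorData) (α : ℝ)
    (hα : α ∈ Set.Ioo (0:ℝ) 2) (u : ℝ) (hu : 1 < u) :
    ∃ j : ℕ, 1 ≤ j ∧ ∃ H : Set ℝ, MeasurableSet H ∧ H ⊆ S.Lam (j - 1) \ S.Lam j ∧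
      S.mes (symmDiff {x ∈ Set.Icc (0:ℝ) 1 | ENNReal.ofReal u < S.phi α x}
        (S.Lam j ∪ H)) = 0 ∧
      S.lam ^ j ≤ u ^ (-α) ∧ u ^ (-α) ≤ S.lam ^ (j - 1) := by
  have hu0 : 0 < u := one_pos.trans hu
  obtain ⟨j, hj1, hlt, hle⟩ := exists_pow_lt_le_pow_pred S.lam_lt_one
    (Real.rpow_pos_of_pos hu0 (-α)) (Real.rpow_lt_one_of_one_lt_of_neg hu (neg_neg_of_pos hα.1)).le
  refine ⟨j, hj1, (S.Lam (j - 1) \ S.Lam j) ∩ {x | S.F (S.psi x) < u ^ (-α)},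
    S.measurableSet_inter_setOf_F_psi_lt ((S.measurableSet_Lam _).diff (S.measurableSet_Lam _))
      (sdiff_subset.trans (S.Lam_subset_Icc _)) _, inter_subset_left, ?_, hlt.le, hle⟩
  simp_rw [S.ofReal_lt_phi_iff hα.1 hu0]
  rw [S.setOf_F_psi_lt_eq hlt hle, symmDiff_self, bot_eq_empty, measure_empty]
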